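/- For box-constrained water-filling (maximize ∑_{k∈A} f_k(p_k), s.t. ∑_{k∈A} p_k ≤ Q, γ_k ≤ p_k ≤ τ_k), the optimal allocation is componentwise non-decreasing in the budget Q: if Q₁ ≤ Q₂ (both feasible budgets, i.e., ∑ γ_k ≤ Q₁ ≤ Q₂ ≤ ∑ τ_k), then the optimal solutions p(Q₁), p(Q₂) satisfy p_k(Q₁) ≤ p_k(Q₂) for every k. -/

import Mathlib

/-!
If the optimal allocations `p` (budget `Q₁`) and `q` (budget `Q₂`) crossed, i.e. `p i < q i` and
`q j < p j`, then moving a small amount `ε` from `j` to `i` in `p` and from `i` to `j` in `q` keeps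
both feasible, and by strict concavity of `f i` and `f j` the two new allocations have a larger
combined utility than `p` and `q`, contradicting optimality. So `p ≤ q` or `q ≤ p`. In the second
case, if `q k < p k` somewhere then `∑ q < ∑ p ≤ Q₁ ≤ Q₂`: the budget `Q₂` is slack at `q`, and
since each `f k` is strictly increasing this forces `q = τ`, whence `p ≤ q` after all.
-/

open Finset Function

lemma StrictConcaveOn.add_lt_add_of_shift_inward {s : Set ℝ} {f : ℝ → ℝ}
    (hf : StrictConcaveOn ℝ s f) {a b ε : ℝ} (ha : a ∈ s) (hb : b ∈ s) (hab : a < b)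
    (hε : 0 < ε) (hεb : ε < b - a) :
    f a + f b < f (a + ε) + f (b - ε) := by
  have hba : 0 < b - a := by linarith
  set t := ε / (b - a)
  have ht0 : 0 < t := div_pos hε hba
  have ht1 : t < 1 := (div_lt_one hba).2 hεb
  have htb : t * (b - a) = ε := div_mul_cancel₀ ε hba.ne'
  have hleft := hf.2 ha hb hab.ne (sub_pos.2 ht1) ht0 (by ring)
  have hright := hf.2 ha hb hab.ne ht0 (sub_pos.2 ht1) (by ring)
  have e₁ : (1 - t) • a + t • b = a + ε := by simp only [smul_eq_mul]; linear_combination htb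
  have e₂ : t • a + (1 - t) • b = b - ε := by simp only [smul_eq_mul]; linear_combination -htb
  rw [e₁] at hleft
  rw [e₂] at hright
  simp only [smul_eq_mul] at hleft hright
  linarith

variable {ι : Type*} [Fintype ι] [DecidableEq ι]

lemma sum_apply_update (g : ι → ℝ → ℝ) (x : ι → ℝ) (i : ι) (a : ℝ) :
    ∑ k, g k (update x i a k) = ∑ k, g k (x k) + (g i a - g i (x i)) := by
  simp_rw [apply_update g x i a]
  rw [sum_update_of_mem (mem_univ i), ← add_sum_erase univ _ (mem_univ i), sdiff_singleton_eq_erase]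
  ring

def transfer (x : ι → ℝ) (i j : ι) (ε : ℝ) : ι → ℝ :=
  update (update x j (x j - ε)) i (x i + ε)

lemma sum_apply_transfer (g : ι → ℝ → ℝ) (x : ι → ℝ) {i j : ι} (hij : i ≠ j) (ε : ℝ) :
    ∑ k, g k (transfer x i j ε k) =
      ∑ k, g k (x k) + (g i (x i + ε) - g i (x i)) + (g j (x j - ε) - g j (x j)) := by
  rw [transfer, sum_apply_update, sum_apply_update, update_of_ne hij]
  ring

def boxBudgetSet (γ τ : ι → ℝ) (Q : ℝ) : Set (ι → ℝ) :=
  {r | ∑ k, r k ≤ Q ∧ ∀ k, γ k ≤ r k ∧ r k ≤ τ k}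

variable {γ τ : ι → ℝ} {Q : ℝ}

lemma transfer_mem_boxBudgetSet {x : ι → ℝ} (hx : x ∈ boxBudgetSet γ τ Q) {i j : ι} (hij : i ≠ j)
    {ε : ℝ} (hε : 0 ≤ ε) (hi : x i + ε ≤ τ i) (hj : γ j ≤ x j - ε) :
    transfer x i j ε ∈ boxBudgetSet γ τ Q := by
  obtain ⟨hsum, hbox⟩ := hx
  refine ⟨?_, fun k => ?_⟩
  · have := sum_apply_transfer (fun _ => id) x hij ε
    simp only [id] at this
    linarith
  · by_cases hki : k = i
    · subst hki
      simp only [transfer, update_self]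
      exact ⟨by linarith [(hbox k).1], hi⟩
    by_cases hkj : k = j
    · subst hkj
      simp only [transfer, update_of_ne hki, update_self]
      exact ⟨hj, by linarith [(hbox k).2]⟩
    simpa only [transfer, update_of_ne hki, update_of_ne hkj] using hbox k

lemma update_add_mem_boxBudgetSet {x : ι → ℝ} (hx : x ∈ boxBudgetSet γ τ Q) {i : ι} {δ : ℝ}
    (hδ : 0 ≤ δ) (hi : x i + δ ≤ τ i) (hsum : ∑ k, x k + δ ≤ Q) :
    update x i (x i + δ) ∈ boxBudgetSet γ τ Q := by
  refine ⟨?_, ?_⟩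
  · have := sum_apply_update (fun _ => id) x i (x i + δ)
    simp only [id] at this
    linarith
  · refine (forall_update_iff x fun k y => γ k ≤ y ∧ y ≤ τ k).2 ⟨⟨?_, hi⟩, fun k _ => hx.2 k⟩
    linarith [(hx.2 i).1]

variable {f : ι → ℝ → ℝ}

theorem eq_upper_of_sum_lt_of_isMaxOn (hmono : ∀ k, StrictMono (f k)) {x : ι → ℝ}
    (hx : x ∈ boxBudgetSet γ τ Q) (hmax : IsMaxOn (fun r => ∑ k, f k (r k)) (boxBudgetSet γ τ Q) x)
    (hslack : ∑ k, x k < Q) (i : ι) :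
    x i = τ i := by
  by_contra hne
  have hlt : x i < τ i := lt_of_le_of_ne (hx.2 i).2 hne
  set δ := min (τ i - x i) (Q - ∑ k, x k)
  have hδ : 0 < δ := lt_min (by linarith) (by linarith)
  have hmem := update_add_mem_boxBudgetSet hx hδ.le
    (by linarith [min_le_left (τ i - x i) (Q - ∑ k, x k)])
    (by linarith [min_le_right (τ i - x i) (Q - ∑ k, x k)])
  have hle := isMaxOn_iff.1 hmax _ hmem
  rw [sum_apply_update] at hle
  linarith [hmono i (lt_add_of_pos_right (x i) hδ)]

theorem le_or_ge_of_isMaxOn (hconc : ∀ k, StrictConcaveOn ℝ Set.univ (f k)) {Q₁ Q₂ : ℝ}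
    {p q : ι → ℝ} (hp : p ∈ boxBudgetSet γ τ Q₁)
    (hpmax : IsMaxOn (fun r => ∑ k, f k (r k)) (boxBudgetSet γ τ Q₁) p)
    (hq : q ∈ boxBudgetSet γ τ Q₂)
    (hqmax : IsMaxOn (fun r => ∑ k, f k (r k)) (boxBudgetSet γ τ Q₂) q) :
    p ≤ q ∨ q ≤ p := by
  by_contra hcross
  simp only [not_or, Pi.le_def, not_forall, not_le] at hcross
  obtain ⟨⟨j, hj⟩, ⟨i, hi⟩⟩ := hcross
  have hij : i ≠ j := by rintro rfl; linarith
  obtain ⟨ε, hε, hεm⟩ := exists_between (lt_min (sub_pos.2 hi) (sub_pos.2 hj))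
  obtain ⟨hεi, hεj⟩ := lt_min_iff.1 hεm
  have hp' := isMaxOn_iff.1 hpmax _ (transfer_mem_boxBudgetSet hp hij hε.le
    (by linarith [(hq.2 i).2]) (by linarith [(hq.2 j).1]))
  have hq' := isMaxOn_iff.1 hqmax _ (transfer_mem_boxBudgetSet hq hij.symm hε.le
    (by linarith [(hp.2 j).2]) (by linarith [(hp.2 i).1]))
  rw [sum_apply_transfer _ _ hij] at hp'
  rw [sum_apply_transfer _ _ hij.symm] at hq'
  have gain_i := (hconc i).add_lt_add_of_shift_inward trivial trivial hi hε hεi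
  have gain_j := (hconc j).add_lt_add_of_shift_inward trivial trivial hj hε hεj
  linarith

theorem stmt_16_general (K : ℕ) (f : Fin K → ℝ → ℝ) (γ τ : Fin K → ℝ)
    (hmono : ∀ k, StrictMono (f k))
    (hconc : ∀ k, StrictConcaveOn ℝ Set.univ (f k))
    (Q₁ Q₂ : ℝ) (hQ : Q₁ ≤ Q₂)
    (p q : Fin K → ℝ)
    (hp_feas : (∑ k, p k) ≤ Q₁ ∧ ∀ k, γ k ≤ p k ∧ p k ≤ τ k)
    (hp_opt : ∀ r : Fin K → ℝ,
      ((∑ k, r k) ≤ Q₁ ∧ ∀ k, γ k ≤ r k ∧ r k ≤ τ k) →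
      (∑ k, f k (r k)) ≤ ∑ k, f k (p k))
    (hq_feas : (∑ k, q k) ≤ Q₂ ∧ ∀ k, γ k ≤ q k ∧ q k ≤ τ k)
    (hq_opt : ∀ r : Fin K → ℝ,
      ((∑ k, r k) ≤ Q₂ ∧ ∀ k, γ k ≤ r k ∧ r k ≤ τ k) →
      (∑ k, f k (r k)) ≤ ∑ k, f k (q k)) :
    ∀ k, p k ≤ q k := by
  have hpmax : IsMaxOn (fun r => ∑ k, f k (r k)) (boxBudgetSet γ τ Q₁) p := isMaxOn_iff.2 hp_opt
  have hqmax : IsMaxOn (fun r => ∑ k, f k (r k)) (boxBudgetSet γ τ Q₂) q := isMaxOn_iff.2 hq_opt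
  intro k
  rcases le_or_ge_of_isMaxOn hconc hp_feas hpmax hq_feas hqmax with hle | hge
  · exact hle k
  by_contra! hlt
  have hsum : ∑ i, q i < ∑ i, p i := sum_lt_sum (fun i _ => hge i) ⟨k, mem_univ k, hlt⟩
  have hq_top := eq_upper_of_sum_lt_of_isMaxOn hmono hq_feas hqmax
    (hsum.trans_le (hp_feas.1.trans hQ)) k
  linarith [(hp_feas.2 k).2]

/-- Budget monotonicity of box-constrained water-filling: the optimal
allocation is componentwise non-decreasing in the budget. -/
theorem stmt_16 (K : ℕ) (f : Fin K → ℝ → ℝ) (γ τ : Fin K → ℝ)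
    (hγτ : ∀ k, γ k ≤ τ k)
    (hmono : ∀ k, StrictMono (f k))
    (hconc : ∀ k, StrictConcaveOn ℝ Set.univ (f k))
    (hdiff : ∀ k, Differentiable ℝ (f k))
    (hcont : ∀ k, Continuous (deriv (f k)))
    (Q₁ Q₂ : ℝ) (hQ₁ : (∑ k, γ k) ≤ Q₁) (hQ : Q₁ ≤ Q₂) (hQ₂ : Q₂ ≤ ∑ k, τ k)
    (p q : Fin K → ℝ)
    (hp_feas : (∑ k, p k) ≤ Q₁ ∧ ∀ k, γ k ≤ p k ∧ p k ≤ τ k)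
    (hp_opt : ∀ r : Fin K → ℝ,
      ((∑ k, r k) ≤ Q₁ ∧ ∀ k, γ k ≤ r k ∧ r k ≤ τ k) →
      (∑ k, f k (r k)) ≤ ∑ k, f k (p k))
    (hq_feas : (∑ k, q k) ≤ Q₂ ∧ ∀ k, γ k ≤ q k ∧ q k ≤ τ k)
    (hq_opt : ∀ r : Fin K → ℝ,
      ((∑ k, r k) ≤ Q₂ ∧ ∀ k, γ k ≤ r k ∧ r k ≤ τ k) →
      (∑ k, f k (r k)) ≤ ∑ k, f k (q k)) :
    ∀ k, p k ≤ q k :=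
  stmt_16_general K f γ τ hmono hconc Q₁ Q₂ hQ p q hp_feas hp_opt hq_feas hq_opt
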